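/- Let σ_x(z) = (z+x)/(1+xz) for x ∈ (0,1), let L(z) = (1/2)log((1+z)/(1-z)), a ∈ ℂ, and L₁ = L/(1+aL) (assuming 1+aL ≠ 0 on 𝔻). Then the Koebe transforms g_x(z) = (L₁(σ_x(z)) - L₁(x)) / ((1-x²)·L₁'(x)) converge locally uniformly on the unit disk to L as x → 1⁻. -/

import Mathlib

open Complex Metric Filter Topology Set

/-! The Möbius map `σ_x` is a hyperbolic translation along the real axis and `L = artanh`
linearises it: `L (σ_x z) = L z + L x`. Hence the Koebe transform of `L₁ = L / (1 + a L)` is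
`L z / (1 + t_x L z)` with `t_x = a / (1 + a L x)`. As `x → 1⁻`, `L x → +∞`, so `t_x → 0`, and
`L / (1 + t L)` tends to `L` locally uniformly as `t → 0` because `L` is locally bounded. -/

theorem ContinuousOn.tendstoLocallyUniformlyOn_div_one_add_mul {𝕜 ι X : Type*} [NormedField 𝕜]
    [TopologicalSpace X] {s : Set X} {f : X → 𝕜} {t : ι → 𝕜} {l : Filter ι}
    (hf : ContinuousOn f s) (ht : Tendsto t l (𝓝 0)) :
    TendstoLocallyUniformlyOn (fun i x => f x / (1 + t i * f x)) f l s := by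
  have hconst : TendstoLocallyUniformlyOn (fun _ => f) f l s :=
    TendstoUniformlyOn.tendstoLocallyUniformlyOn fun _ hu =>
      .of_forall fun _ _ _ => refl_mem_uniformity hu
  have hden : TendstoLocallyUniformlyOn (fun i x => 1 + t i * f x) (fun x => 1 + 0 * f x) l s :=
    (tendsto_const_nhds.tendstoUniformlyOn_const s).tendstoLocallyUniformlyOn.fun_add
      ((ht.tendstoUniformlyOn_const s).tendstoLocallyUniformlyOn.fun_mul₀ hconst
        continuousOn_const hf)
  simpa using hconst.fun_div₀ hden hf (by fun_prop) (by simp)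

theorem tendsto_div_one_add_mul_of_tendsto_cobounded {𝕜 ι : Type*} [NormedField 𝕜] {l : Filter ι}
    {u : ι → 𝕜} (hu : Tendsto u l (Bornology.cobounded 𝕜)) (a : 𝕜) :
    Tendsto (fun i => a / (1 + a * u i)) l (𝓝 0) := by
  rcases eq_or_ne a 0 with rfl | ha
  · simpa using tendsto_const_nhds
  have h : ∀ i, a / (1 + a * u i) = (u i + a⁻¹)⁻¹ := fun i => by
    rw [show 1 + a * u i = a * (u i + a⁻¹) by field_simp; ring, div_mul_cancel_left₀ ha]
  simp_rw [h]
  exact tendsto_inv₀_cobounded.comp ((tendsto_add_const_cobounded a⁻¹).comp hu)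

theorem HasDerivAt.div_one_add_mul {𝕜 : Type*} [NontriviallyNormedField 𝕜] {f : 𝕜 → 𝕜}
    {f' x : 𝕜} (hf : HasDerivAt f f' x) (a : 𝕜) (hx : 1 + a * f x ≠ 0) :
    HasDerivAt (fun w => f w / (1 + a * f w)) (f' / (1 + a * f x) ^ 2) x := by
  refine (hf.div ((hf.const_mul a).const_add 1) hx).congr_deriv ?_
  field_simp
  ring

theorem Real.tendsto_artanh_nhdsLT_one : Tendsto artanh (𝓝[<] 1) atTop := by
  refine tendsto_atTop.2 fun M => ?_
  filter_upwards [Ioo_mem_nhdsLT (tanh_lt_one M)] with x hx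
  simpa [artanh_tanh] using artanh_le_artanh (neg_one_lt_tanh M) hx.2 hx.1.le

namespace Complex

noncomputable def artanh (z : ℂ) : ℂ := 1 / 2 * log ((1 + z) / (1 - z))

theorem artanh_ofReal {x : ℝ} (hx : x ∈ Icc (-1) 1) : artanh x = Real.artanh x := by
  have hq : 0 ≤ (1 + x) / (1 - x) := div_nonneg (by linarith [hx.1]) (by linarith [hx.2])
  rw [Real.artanh_eq_half_log hx, artanh, ← ofReal_one, ← ofReal_add, ← ofReal_sub,
    ← ofReal_div, ← ofReal_log hq]
  push_cast
  rfl

theorem one_add_div_one_sub_mem_slitPlane {z : ℂ} (hz : ‖z‖ < 1) :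
    (1 + z) / (1 - z) ∈ slitPlane := by
  have h₁ : 1 - z ≠ 0 := sub_ne_zero.2 fun h => by simp [← h] at hz
  refine mem_slitPlane_iff.2 (Or.inl ?_)
  have hre : ((1 + z) / (1 - z)).re = (1 - normSq z) / normSq (1 - z) := by
    rw [div_re, ← add_div, normSq_apply z]
    congr 1
    simp only [add_re, sub_re, one_re, add_im, sub_im, one_im]
    ring
  rw [hre]
  refine div_pos ?_ (normSq_pos.2 h₁)
  rw [normSq_eq_norm_sq]
  nlinarith [norm_nonneg z]

theorem hasDerivAt_artanh {z : ℂ} (hz : (1 + z) / (1 - z) ∈ slitPlane) :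
    HasDerivAt artanh (1 - z ^ 2)⁻¹ z := by
  have h₁ : 1 - z ≠ 0 := fun h => slitPlane_ne_zero hz (by simp [h])
  have h₂ : 1 + z ≠ 0 := fun h => slitPlane_ne_zero hz (by simp [h])
  have hq : HasDerivAt (fun w => (1 + w) / (1 - w)) (2 / (1 - z) ^ 2) z := by
    refine (((hasDerivAt_id z).const_add 1).div ((hasDerivAt_id z).const_sub 1) h₁).congr_deriv ?_
    simp only [id]
    ring
  refine (((hasDerivAt_log hz).comp z hq).const_mul (1 / 2 : ℂ)).congr_deriv ?_
  rw [show 1 - z ^ 2 = (1 + z) * (1 - z) by ring]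
  field_simp

theorem continuousOn_artanh : ContinuousOn artanh (ball 0 1) := fun _ hz =>
  (hasDerivAt_artanh (one_add_div_one_sub_mem_slitPlane (mem_ball_zero_iff.1 hz))).continuousAt
    |>.continuousWithinAt

theorem one_add_ofReal_mul_ne_zero {x : ℝ} (hx : x ∈ Ioo (-1) 1) {z : ℂ} (hz : ‖z‖ < 1) :
    1 + x * z ≠ 0 := by
  intro h
  have hxz : ‖(x : ℂ) * z‖ < 1 := by
    rw [norm_mul, norm_real, Real.norm_eq_abs]
    nlinarith [abs_lt.2 hx, norm_nonneg z, abs_nonneg x]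
  simp [eq_neg_of_add_eq_zero_right h] at hxz

theorem norm_moebius_lt_one {x : ℝ} (hx : x ∈ Ioo (-1) 1) {z : ℂ} (hz : ‖z‖ < 1) :
    ‖(z + x) / (1 + x * z)‖ < 1 := by
  have hd : 0 < ‖1 + x * z‖ := norm_pos_iff.2 (one_add_ofReal_mul_ne_zero hx hz)
  rw [norm_div, div_lt_one hd, ← sq_lt_sq₀ (norm_nonneg _) hd.le, ← normSq_eq_norm_sq,
    ← normSq_eq_norm_sq]
  have key : normSq (1 + x * z) - normSq (z + x) = (1 - x ^ 2) * (1 - normSq z) := by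
    simp only [normSq_apply, add_re, add_im, mul_re, mul_im, ofReal_re, ofReal_im, one_re, one_im]
    ring
  have hx2 : x ^ 2 < 1 := by nlinarith [hx.1, hx.2]
  have hz2 : normSq z < 1 := by rw [normSq_eq_norm_sq]; nlinarith [norm_nonneg z]
  nlinarith

theorem artanh_moebius {x : ℝ} (hx : x ∈ Ioo (-1) 1) {z : ℂ} (h₁ : 1 - z ≠ 0) (h₂ : 1 + z ≠ 0)
    (h₃ : 1 + x * z ≠ 0) : artanh ((z + x) / (1 + x * z)) = artanh z + artanh x := by
  have hr : 0 < (1 + x) / (1 - x) := div_pos (by linarith [hx.1]) (by linarith [hx.2])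
  have hx₁ : (1 : ℂ) - x ≠ 0 := mod_cast (by linarith [hx.2] : (1 : ℝ) - x ≠ 0)
  have hσ : (1 + (z + x) / (1 + x * z)) / (1 - (z + x) / (1 + x * z)) =
      (((1 + x) / (1 - x) : ℝ) : ℂ) * ((1 + z) / (1 - z)) := by
    rw [one_add_div h₃, one_sub_div h₃, div_div_div_cancel_right₀ h₃,
      show 1 + x * z - (z + x) = (1 - x) * (1 - z) by ring]
    push_cast
    field_simp
    ring
  rw [artanh, hσ, log_ofReal_mul hr (div_ne_zero h₂ h₁), artanh_ofReal (Ioo_subset_Icc_self hx),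
    Real.artanh_eq_half_log (Ioo_subset_Icc_self hx), artanh]
  push_cast
  ring

theorem tendsto_artanh_ofReal_nhdsLT_one :
    Tendsto (fun x : ℝ => artanh x) (𝓝[<] 1) (Bornology.cobounded ℂ) := by
  refine Tendsto.congr' ?_
    ((RCLike.tendsto_ofReal_atTop_cobounded (𝕜 := ℂ)).comp Real.tendsto_artanh_nhdsLT_one)
  filter_upwards [Ioo_mem_nhdsLT (show (-1 : ℝ) < 1 by norm_num)] with x hx
  exact (artanh_ofReal (Ioo_subset_Icc_self hx)).symm

end Complex

noncomputable def koebeTransform (f : ℂ → ℂ) (x : ℝ) (z : ℂ) : ℂ :=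
  (f ((z + x) / (1 + x * z)) - f x) / ((1 - (x : ℂ) ^ 2) * deriv f x)

theorem koebeTransform_artanh_div_one_add_mul {a : ℂ} {x : ℝ} (hx : x ∈ Ioo (-1) 1) {z : ℂ}
    (hz : ‖z‖ < 1) (hx₀ : 1 + a * artanh x ≠ 0)
    (hσ : 1 + a * artanh ((z + x) / (1 + x * z)) ≠ 0) :
    koebeTransform (fun w => artanh w / (1 + a * artanh w)) x z =
      artanh z / (1 + a / (1 + a * artanh x) * artanh z) := by
  have hx₁ : ‖(x : ℂ)‖ < 1 := by simpa [abs_lt] using hx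
  have h₁ : 1 - z ≠ 0 := sub_ne_zero.2 fun h => by simp [← h] at hz
  have h₂ : 1 + z ≠ 0 := fun h => by simp [eq_neg_of_add_eq_zero_right h] at hz
  have h₃ : 1 + x * z ≠ 0 := one_add_ofReal_mul_ne_zero hx hz
  have hq : 1 - (x : ℂ) ^ 2 ≠ 0 := by
    exact_mod_cast (show (0 : ℝ) < 1 - x ^ 2 by nlinarith [hx.1, hx.2]).ne'
  rw [artanh_moebius hx h₁ h₂ h₃] at hσ
  rw [koebeTransform, artanh_moebius hx h₁ h₂ h₃,
    ((hasDerivAt_artanh (one_add_div_one_sub_mem_slitPlane hx₁)).div_one_add_mul a hx₀).deriv]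
  generalize artanh z = u, artanh (x : ℂ) = v at *
  rw [show 1 + a / (1 + a * v) * u = (1 + a * (u + v)) / (1 + a * v) by field_simp; ring,
    div_sub_div _ _ hσ hx₀, mul_div_assoc', mul_inv_cancel₀ hq]
  field_simp
  ring

theorem koebe_transforms_of_L1_tend_to_L
    (L L₁ : ℂ → ℂ)
    (hL : L = fun z => (1/2) * Complex.log ((1 + z) / (1 - z)))
    (a : ℂ)
    (hne : ∀ z ∈ ball (0:ℂ) 1, 1 + a * L z ≠ 0)
    (hL₁ : L₁ = fun z => L z / (1 + a * L z))
    (g : ℝ → ℂ → ℂ)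
    (hg : ∀ x ∈ Set.Ioo (0:ℝ) 1, ∀ z : ℂ,
      g x z = (L₁ ((z + x) / (1 + x * z)) - L₁ x) / ((1 - (x:ℂ)^2) * deriv L₁ x)) :
    TendstoLocallyUniformlyOn g L (nhdsWithin 1 (Set.Iio (1:ℝ))) (ball (0:ℂ) 1) := by
  obtain rfl : L = artanh := hL
  subst hL₁
  have hne' {w : ℂ} (hw : ‖w‖ < 1) : 1 + a * artanh w ≠ 0 := hne w (mem_ball_zero_iff.2 hw)
  have ht : Tendsto (fun x : ℝ => a / (1 + a * artanh x)) (𝓝[<] 1) (𝓝 0) :=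
    tendsto_div_one_add_mul_of_tendsto_cobounded tendsto_artanh_ofReal_nhdsLT_one a
  refine (continuousOn_artanh.tendstoLocallyUniformlyOn_div_one_add_mul ht).congr_inseparable ?_
  filter_upwards [Ioo_mem_nhdsLT zero_lt_one] with x hx z hz
  have hx' : x ∈ Ioo (-1) 1 := ⟨by linarith [hx.1], hx.2⟩
  have hz' : ‖z‖ < 1 := mem_ball_zero_iff.1 hz
  refine .of_eq ((koebeTransform_artanh_div_one_add_mul hx' hz' ?_ ?_).symm.trans (hg x hx z).symm)
  · exact hne' (by simpa [abs_lt] using hx')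
  · exact hne' (norm_moebius_lt_one hx' hz')
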